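/- arXiv:2405.05558 — 2 statements merged into one kernel-verified Lean document; each statement's English description precedes it below -/
import Mathlib

section
/- Energy dissipation in the lane-based model: along solutions of the system ṡ_i = v_{i-1} - v_i (i = 2,…,n), v̇_1 = -k_1(v_1 - v*) - V'(s_2), v̇_i = -k_i(v_i - v*) + V'(s_i) - V'(s_{i+1}) (i = 2,…,n-1), v̇_n = -k_n(v_n - v*) + V'(s_n), where each k_i ≥ γ > 0, the Lyapunov function H̃(s, v) = ½Σ_{i=1}ⁿ(v_i - v*)² + Σ_{i=2}ⁿV(s_i) satisfies d/dt H̃ = -Σ_{i=1}ⁿ k_i(v_i - v*)² ≤ -γΣ_{i=1}ⁿ(v_i - v*)² ≤ 0. -/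
open Set Filter Topology

/-!
Differentiating `H̃` gives `Σ aᵢ v̇ᵢ + Σ V'(sᵢ) ṡᵢ` with `aᵢ = vᵢ - v*`. The damping terms of `v̇ᵢ`
contribute `-Σ kᵢ aᵢ²`; the interaction terms `V'(sᵢ) - V'(sᵢ₊₁)` (with `V'(s₁) = V'(sₙ₊₁) = 0`)
cancel against `Σ V'(sᵢ)(aᵢ₋₁ - aᵢ)` by summation by parts, whose boundary terms vanish.
-/

open Finset

theorem sum_mul_sub_succ_add_sum_mul_pred_sub {R : Type*} [CommRing R] (a p : ℕ → R)
    {n : ℕ} (hn : 1 ≤ n) :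
    ∑ i ∈ Finset.Icc 1 n, a i * (p i - p (i + 1)) + ∑ i ∈ Finset.Icc 2 n, p i * (a (i - 1) - a i)
      = a 1 * p 1 - a n * p (n + 1) := by
  induction n, hn using Nat.le_induction with
  | base => simp [mul_sub]
  | succ n hn ih =>
    rw [sum_Icc_succ_top (by omega), sum_Icc_succ_top (by omega), Nat.add_sub_cancel]
    linear_combination ih

theorem sum_mul_damped_add_sum_mul_pred_sub {a c p : ℕ → ℝ} {n : ℕ} (hn : 1 ≤ n)
    (hp₁ : p 1 = 0) (hpₙ : p (n + 1) = 0) :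
    ∑ i ∈ Finset.Icc 1 n, a i * (-c i * a i + (p i - p (i + 1)))
        + ∑ i ∈ Finset.Icc 2 n, p i * (a (i - 1) - a i)
      = -∑ i ∈ Finset.Icc 1 n, c i * a i ^ 2 := by
  have hbp := sum_mul_sub_succ_add_sum_mul_pred_sub a p hn
  simp only [mul_add, sum_add_distrib, hp₁, hpₙ, mul_zero, sub_zero] at hbp ⊢
  rw [add_assoc, hbp, add_zero, ← sum_neg_distrib]
  exact sum_congr rfl fun i _ => by ring

theorem hasDerivAt_lyapunov {n : ℕ} {vs t : ℝ} {V Vp : ℝ → ℝ} {v s : ℕ → ℝ → ℝ} {w : ℕ → ℝ}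
    (hV : ∀ i ∈ Finset.Icc 2 n, HasDerivAt V (Vp (s i t)) (s i t))
    (hv : ∀ i ∈ Finset.Icc 1 n, HasDerivAt (v i) (w i) t)
    (hs : ∀ i ∈ Finset.Icc 2 n, HasDerivAt (s i) (v (i - 1) t - v i t) t) :
    HasDerivAt
      (fun τ => (1 / 2) * ∑ i ∈ Finset.Icc 1 n, (v i τ - vs) ^ 2 + ∑ i ∈ Finset.Icc 2 n, V (s i τ))
      (∑ i ∈ Finset.Icc 1 n, (v i t - vs) * w i
        + ∑ i ∈ Finset.Icc 2 n, Vp (s i t) * (v (i - 1) t - v i t)) t := by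
  have hkin : HasDerivAt (fun τ => ∑ i ∈ Finset.Icc 1 n, (v i τ - vs) ^ 2)
      (∑ i ∈ Finset.Icc 1 n, 2 * (v i t - vs) * w i) t := by
    refine HasDerivAt.fun_sum fun i hi => ?_
    simpa using ((hv i hi).sub_const vs).fun_pow 2
  have hpot : HasDerivAt (fun τ => ∑ i ∈ Finset.Icc 2 n, V (s i τ))
      (∑ i ∈ Finset.Icc 2 n, Vp (s i t) * (v (i - 1) t - v i t)) t :=
    HasDerivAt.fun_sum fun i hi => (hV i hi).comp t (hs i hi)
  refine ((hkin.const_mul (1 / 2)).add hpot).congr_deriv ?_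
  rw [mul_sum]
  congr 1
  exact sum_congr rfl fun i _ => by ring

/-- `V'(sᵢ)` for the gaps `2 ≤ i ≤ n`, extended by zero, so that the interaction term in the
equation of every car `1 ≤ i ≤ n` reads `gapForce i - gapForce (i + 1)`. -/
noncomputable def gapForce (n : ℕ) (Vp : ℝ → ℝ) (s : ℕ → ℝ → ℝ) (t : ℝ) (i : ℕ) : ℝ :=
  if i ∈ Finset.Icc 2 n then Vp (s i t) else 0

theorem hasDerivAt_velocity {n : ℕ} (hn : 2 ≤ n) {vs t : ℝ} {Vp : ℝ → ℝ}
    {v s k : ℕ → ℝ → ℝ}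
    (hv1 : HasDerivAt (v 1) (-(k 1 t) * (v 1 t - vs) - Vp (s 2 t)) t)
    (hvi : ∀ i, 2 ≤ i → i ≤ n - 1 →
      HasDerivAt (v i) (-(k i t) * (v i t - vs) + Vp (s i t) - Vp (s (i + 1) t)) t)
    (hvn : HasDerivAt (v n) (-(k n t) * (v n t - vs) + Vp (s n t)) t) :
    ∀ i ∈ Finset.Icc 1 n, HasDerivAt (v i)
      (-k i t * (v i t - vs) + (gapForce n Vp s t i - gapForce n Vp s t (i + 1))) t := by
  intro i hi
  rw [Finset.mem_Icc] at hi
  obtain rfl | hi₁ := eq_or_ne i 1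
  · convert hv1 using 1
    simp [gapForce, hn]
    ring
  obtain rfl | hiₙ := eq_or_ne i n
  · convert hvn using 1
    simp [gapForce, hi.1]
    omega
  · convert hvi i (by omega) (by omega) using 1
    simp [gapForce, show 2 ≤ i by omega, show i ≤ n by omega, show i + 1 ≤ n by omega, hi.1]
    ring

theorem stmt11 (n : ℕ) (hn : 2 ≤ n) (γ vs L : ℝ) (hγ : 0 < γ)
    (V Vp : ℝ → ℝ)
    (hV : ∀ x : ℝ, L < x → HasDerivAt V (Vp x) x)
    (v s : ℕ → ℝ → ℝ) (k : ℕ → ℝ → ℝ)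
    (hk : ∀ i ∈ Finset.Icc 1 n, ∀ t : ℝ, γ ≤ k i t)
    (hdom : ∀ i ∈ Finset.Icc 2 n, ∀ t : ℝ, L < s i t)
    (hs : ∀ i ∈ Finset.Icc 2 n, ∀ t : ℝ,
      HasDerivAt (s i) (v (i - 1) t - v i t) t)
    (hv1 : ∀ t : ℝ,
      HasDerivAt (v 1) (-(k 1 t) * (v 1 t - vs) - Vp (s 2 t)) t)
    (hvi : ∀ i, 2 ≤ i → i ≤ n - 1 → ∀ t : ℝ,
      HasDerivAt (v i) (-(k i t) * (v i t - vs) + Vp (s i t) - Vp (s (i + 1) t)) t)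
    (hvn : ∀ t : ℝ,
      HasDerivAt (v n) (-(k n t) * (v n t - vs) + Vp (s n t)) t) :
    ∀ t : ℝ,
      HasDerivAt
        (fun τ => (1 / 2) * ∑ i ∈ Finset.Icc 1 n, (v i τ - vs) ^ 2
          + ∑ i ∈ Finset.Icc 2 n, V (s i τ))
        (-(∑ i ∈ Finset.Icc 1 n, k i t * (v i t - vs) ^ 2)) t ∧
      -(∑ i ∈ Finset.Icc 1 n, k i t * (v i t - vs) ^ 2)
        ≤ -γ * ∑ i ∈ Finset.Icc 1 n, (v i t - vs) ^ 2 ∧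
      -γ * ∑ i ∈ Finset.Icc 1 n, (v i t - vs) ^ 2 ≤ 0 := by
  intro t
  have hH := hasDerivAt_lyapunov (vs := vs) (fun i hi => hV _ (hdom i hi t))
    (hasDerivAt_velocity hn (hv1 t) (fun i h₂ hₙ => hvi i h₂ hₙ t) (hvn t)) (hs · · t)
  have hforce : ∀ i ∈ Finset.Icc 2 n, Vp (s i t) * (v (i - 1) t - v i t)
      = gapForce n Vp s t i * ((v (i - 1) t - vs) - (v i t - vs)) := fun i hi => by
    simp [gapForce, hi]
  rw [sum_congr rfl hforce, sum_mul_damped_add_sum_mul_pred_sub (by omega)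
    (by simp [gapForce]) (by simp [gapForce])] at hH
  have hdamp : γ * ∑ i ∈ Finset.Icc 1 n, (v i t - vs) ^ 2 ≤ ∑ i ∈ Finset.Icc 1 n, k i t * (v i t - vs) ^ 2 := by
    rw [mul_sum]
    exact sum_le_sum fun i hi => mul_le_mul_of_nonneg_right (hk i hi t) (sq_nonneg _)
  have hkin : 0 ≤ ∑ i ∈ Finset.Icc 1 n, (v i t - vs) ^ 2 := sum_nonneg fun i _ => sq_nonneg _
  exact ⟨hH, by linarith, by nlinarith⟩
end

section
/- For the LWR particle scheme ẋ_1 = F(0), ẋ_i = F(m/(n s_i)) with s_i = x_{i-1} - x_i, where F : [0, ∞) → [0, ∞) is non-increasing: if F(ρ) = 0 for all ρ ≥ ρ_max := m/L, and initially n·s_i(0) > L for all i, then n·s_i(t) > L for all t ≥ 0 (no collisions). -/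
open Set Filter Topology

/-- Barrier lemma: if `f 0 ≥ A > 0` and `f` has derivative `d t ≥ 0` whenever
`0 < f t < A`, then `f t ≥ A` on `[0, T)`. -/
lemma key13 (T A : ℝ) (f d : ℝ → ℝ)
    (hf : ∀ t ∈ Ico (0:ℝ) T, HasDerivAt f (d t) t)
    (hA : 0 < A) (hfA : A ≤ f 0)
    (hd : ∀ t ∈ Ico (0:ℝ) T, 0 < f t → f t < A → 0 ≤ d t) :
    ∀ t ∈ Ico (0:ℝ) T, A ≤ f t := by
  have main : ∀ B, 0 < B → B < A → ∀ t ∈ Ico (0:ℝ) T, B < f t := by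
    intro B hB hBA
    by_contra h
    push_neg at h
    obtain ⟨t1, ht1, hft1⟩ := h
    have ht10 : (0:ℝ) ≤ t1 := ht1.1
    have hIccsub : Icc (0:ℝ) t1 ⊆ Ico 0 T := fun x hx => ⟨hx.1, lt_of_le_of_lt hx.2 ht1.2⟩
    have hcont : ContinuousOn f (Icc 0 t1) := fun x hx =>
      ((hf x (hIccsub hx)).continuousAt).continuousWithinAt
    set S : Set ℝ := Icc 0 t1 ∩ f ⁻¹' Iic B with hSdef
    have hSne : S.Nonempty := ⟨t1, ⟨ht10, le_refl t1⟩, hft1⟩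
    have hSclosed : IsClosed S :=
      hcont.preimage_isClosed_of_isClosed isClosed_Icc isClosed_Iic
    have hSbdd : BddBelow S := ⟨0, fun x hx => hx.1.1⟩
    set u := sInf S with hudef
    have hu : u ∈ S := hSclosed.csInf_mem hSne hSbdd
    have huIcc : u ∈ Icc (0:ℝ) t1 := hu.1
    have hfu : f u ≤ B := hu.2
    -- second set: last time before u where f ≥ A
    set S2 : Set ℝ := Icc 0 u ∩ f ⁻¹' Ici A with hS2def
    have hIccsub2 : Icc (0:ℝ) u ⊆ Icc 0 t1 := Icc_subset_Icc le_rfl huIcc.2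
    have hcont2 : ContinuousOn f (Icc 0 u) := hcont.mono hIccsub2
    have hS2ne : S2.Nonempty := ⟨0, ⟨le_refl 0, huIcc.1⟩, hfA⟩
    have hS2closed : IsClosed S2 :=
      hcont2.preimage_isClosed_of_isClosed isClosed_Icc isClosed_Ici
    have hS2bdd : BddAbove S2 := ⟨u, fun x hx => hx.1.2⟩
    set w := sSup S2 with hwdef
    have hw : w ∈ S2 := hS2closed.csSup_mem hS2ne hS2bdd
    have hfw : A ≤ f w := hw.2
    have hwu : w < u := lt_of_le_of_ne hw.1.2 (by
      intro hwe; rw [hwe] at hfw; linarith)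
    have hw0 : (0:ℝ) ≤ w := hw.1.1
    -- on (w, u), we have 0 < B < f v < A, so d v ≥ 0
    have hmid : ∀ v ∈ Ioo w u, 0 < f v ∧ f v < A := by
      intro v hv
      have hv0 : (0:ℝ) ≤ v := le_of_lt (lt_of_le_of_lt hw0 hv.1)
      have hvt1 : v ≤ t1 := le_trans hv.2.le huIcc.2
      have hvltA : f v < A := by
        by_contra hc
        push_neg at hc
        have : v ∈ S2 := ⟨⟨hv0, hv.2.le⟩, hc⟩
        exact absurd (le_csSup hS2bdd this) (not_le.mpr hv.1)
      have hvgtB : B < f v := by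
        by_contra hc
        push_neg at hc
        have : v ∈ S := ⟨⟨hv0, hvt1⟩, hc⟩
        exact absurd (csInf_le hSbdd this) (not_le.mpr hv.2)
      exact ⟨lt_trans hB hvgtB, hvltA⟩
    have hsubT : Icc w u ⊆ Ico (0:ℝ) T := fun x hx =>
      ⟨le_trans hw0 hx.1, lt_of_le_of_lt (le_trans hx.2 huIcc.2) ht1.2⟩
    have hmono : MonotoneOn f (Icc w u) := by
      apply monotoneOn_of_deriv_nonneg (convex_Icc w u)
        (hcont.mono (fun x hx => ⟨le_trans hw0 hx.1, le_trans hx.2 huIcc.2⟩))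
      · intro x hx
        rw [interior_Icc] at hx
        exact ((hf x (hsubT ⟨hx.1.le, hx.2.le⟩)).differentiableAt).differentiableWithinAt
      · intro x hx
        rw [interior_Icc] at hx
        have hx' := hsubT ⟨hx.1.le, hx.2.le⟩
        rw [(hf x hx').deriv]
        obtain ⟨h1, h2⟩ := hmid x hx
        exact hd x hx' h1 h2
    have := hmono ⟨le_refl w, hwu.le⟩ ⟨hwu.le, le_refl u⟩ hwu.le
    linarith
  intro t ht
  rcases le_or_gt A (f t) with h | h
  · exact h
  exfalso
  rcases le_or_gt (f t) 0 with h0 | h0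
  · have := main (A/2) (by linarith) (by linarith) t ht
    linarith
  · exact lt_irrefl _ (main (f t) h0 h t ht)

theorem stmt13 (m L F0 T : ℝ) (n : ℕ) (hm : 0 < m) (hL : 0 < L) (hn : 2 ≤ n)
    (hT : 0 < T) (F : ℝ → ℝ)
    (hFc : ContinuousOn F (Ioi 0))
    (hFnn : ∀ ρ : ℝ, 0 < ρ → 0 ≤ F ρ)
    (hFanti : AntitoneOn F (Ioi 0))
    (hF0 : ∀ ρ : ℝ, 0 < ρ → F ρ ≤ F0)
    (hFzero : ∀ ρ : ℝ, m / L ≤ ρ → F ρ = 0)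
    (s : ℕ → ℝ → ℝ)
    (hscont : ∀ i ∈ Finset.Icc 2 n, ContinuousOn (s i) (Ico 0 T))
    (hs2 : ∀ t ∈ Ico (0 : ℝ) T,
      HasDerivAt (s 2) (F0 - F (m / (n * s 2 t))) t)
    (hsi : ∀ i, 3 ≤ i → i ≤ n → ∀ t ∈ Ico (0 : ℝ) T,
      HasDerivAt (s i) (F (m / (n * s (i - 1) t)) - F (m / (n * s i t))) t)
    (h0 : ∀ i ∈ Finset.Icc 2 n, L < n * s i 0) :
    ∀ i ∈ Finset.Icc 2 n, ∀ t ∈ Ico (0 : ℝ) T, L < n * s i t := by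
  have hn0 : (0:ℝ) < (n:ℝ) := by positivity
  have key : ∀ i, 2 ≤ i → i ≤ n → ∃ A, L < A ∧ ∀ t ∈ Ico (0:ℝ) T, A ≤ (n:ℝ) * s i t := by
    intro i hi
    induction i, hi using Nat.le_induction with
    | base =>
      intro _
      refine ⟨(n:ℝ) * s 2 0, h0 2 (Finset.mem_Icc.mpr ⟨le_refl 2, hn⟩), ?_⟩
      apply key13 T _ (fun t => (n:ℝ) * s 2 t)
        (fun t => (n:ℝ) * (F0 - F (m / (n * s 2 t))))
      · intro t ht
        exact (hs2 t ht).const_mul (n:ℝ)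
      · exact lt_trans hL (h0 2 (Finset.mem_Icc.mpr ⟨le_refl 2, hn⟩))
      · exact le_refl _
      · intro t ht hpos _
        have hρ : 0 < m / (n * s 2 t) := div_pos hm hpos
        have := hF0 _ hρ
        have : (0:ℝ) ≤ F0 - F (m / (n * s 2 t)) := by linarith
        positivity
    | succ i hi ih =>
      intro hin
      obtain ⟨A, hAL, hA⟩ := ih (by omega)
      have hmem : i + 1 ∈ Finset.Icc 2 n := Finset.mem_Icc.mpr ⟨by omega, hin⟩
      refine ⟨min A ((n:ℝ) * s (i+1) 0), lt_min hAL (h0 (i+1) hmem), ?_⟩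
      apply key13 T _ (fun t => (n:ℝ) * s (i+1) t)
        (fun t => (n:ℝ) * (F (m / (n * s i t)) - F (m / (n * s (i+1) t))))
      · intro t ht
        have hder := hsi (i+1) (by omega) hin t ht
        simp only [Nat.add_sub_cancel] at hder
        exact hder.const_mul (n:ℝ)
      · exact lt_of_lt_of_le hL (le_min hAL.le (h0 (i+1) hmem).le)
      · exact min_le_right _ _
      · intro t ht hpos hlt
        have hApos : (0:ℝ) < A := lt_trans hL hAL
        have hprev : A ≤ (n:ℝ) * s i t := hA t ht
        have hprevpos : (0:ℝ) < (n:ℝ) * s i t := lt_of_lt_of_le hApos hprev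
        have hle : (n:ℝ) * s (i+1) t ≤ (n:ℝ) * s i t := by
          have := lt_of_lt_of_le hlt (min_le_left _ _)
          linarith
        have hρ1 : (0:ℝ) < m / (n * s i t) := div_pos hm hprevpos
        have hρ2 : (0:ℝ) < m / (n * s (i+1) t) := div_pos hm hpos
        have hρle : m / (n * s i t) ≤ m / (n * s (i+1) t) := by
          gcongr
        have hFle : F (m / (n * s (i+1) t)) ≤ F (m / (n * s i t)) :=
          hFanti hρ1 hρ2 hρle
        have : (0:ℝ) ≤ F (m / (n * s i t)) - F (m / (n * s (i+1) t)) := by linarith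
        positivity
  intro i hi t ht
  obtain ⟨h2i, hin⟩ := Finset.mem_Icc.mp hi
  obtain ⟨A, hAL, hA⟩ := key i h2i hin
  exact lt_of_lt_of_le hAL (hA t ht)
end
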